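/- Let M_1, ..., M_m be real symmetric n×n matrices, b ∈ ℝ^m, and let Y⋆ ∈ ℝ^{n×n} be a positive semi-definite matrix with ⟨M_i, Y⋆⟩ = b_i for all i. Suppose there exists φ ∈ ℝ^m with Σ_{i=1}^m φ_i M_i = I_n (the n×n identity matrix), and suppose Y⋆ is the unique minimizer of the nuclear norm over the affine set {Y ∈ ℝ^{n×n} : ⟨M_i, Y⟩ = b_i for all i}. Then {Y ∈ ℝ^{n×n} : ⟨M_i, Y⟩ = b_i for all i, Y ⪰ 0} = {Y⋆}. -/

import Mathlib

open Matrix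

/-- The nuclear norm of a real square matrix: the trace of `√(Yᴴ Y)`
(for real matrices, `Yᴴ = Yᵀ`), i.e. the sum of the singular values. -/
noncomputable def nuclearNorm {n : ℕ} (Y : Matrix (Fin n) (Fin n) ℝ) : ℝ :=
  (let hA := Matrix.posSemidef_conjTranspose_mul_self Y
   hA.1.eigenvectorUnitary.1 * diagonal (Real.sqrt ∘ hA.1.eigenvalues) *
     (star hA.1.eigenvectorUnitary : Matrix (Fin n) (Fin n) ℝ)).trace

/-!
On the PSD cone the nuclear norm is the trace, and `∑ φᵢ Mᵢ = I` makes the trace constant,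
equal to `∑ φᵢ bᵢ`, on the whole affine set. So every feasible PSD matrix has the same
nuclear norm as `Y⋆`, and uniqueness of the minimizer forces it to be `Y⋆`.
-/

lemma Matrix.PosSemidef.cfc_sqrt_conjTranspose_mul_self {n : Type*} [Fintype n] [DecidableEq n]
    {Y : Matrix n n ℝ} (hY : Y.PosSemidef) : cfc Real.sqrt (Yᴴ * Y) = Y := by
  rw [hY.1.eq, ← pow_two]
  refine (cfc_comp_pow Real.sqrt 2 Y (ha := hY.1)).symm.trans ?_
  conv_rhs => rw [← cfc_id ℝ Y (ha := hY.1)]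
  refine cfc_congr fun x hx => ?_
  rw [hY.1.spectrum_real_eq_range_eigenvalues] at hx
  obtain ⟨i, rfl⟩ := hx
  exact Real.sqrt_sq (hY.eigenvalues_nonneg i)

lemma nuclearNorm_eq_trace_of_posSemidef {n : ℕ} {Y : Matrix (Fin n) (Fin n) ℝ}
    (hY : Y.PosSemidef) : nuclearNorm Y = Y.trace := by
  have h := hY.cfc_sqrt_conjTranspose_mul_self
  rw [(posSemidef_conjTranspose_mul_self Y).1.cfc_eq] at h
  conv_rhs => rw [← h]
  rfl

lemma Matrix.trace_eq_sum_of_sum_smul_eq_one {ι n R : Type*} [Fintype ι] [Fintype n]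
    [DecidableEq n] [CommRing R] {M : ι → Matrix n n R} {φ b : ι → R}
    (hsum : ∑ i, φ i • M i = 1) {Y : Matrix n n R} (hY : ∀ i, ((M i)ᵀ * Y).trace = b i) :
    Y.trace = ∑ i, φ i * b i := by
  calc Y.trace = ((∑ i, φ i • M i)ᵀ * Y).trace := by rw [hsum, transpose_one, one_mul]
    _ = ∑ i, φ i * b i := by
      simp only [transpose_sum, transpose_smul, Matrix.sum_mul, trace_sum, smul_mul, trace_smul,
        hY, smul_eq_mul]

theorem psd_feasible_set_singleton_identity_span_general
    {n m : ℕ}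
    (M : Fin m → Matrix (Fin n) (Fin n) ℝ)
    (b : Fin m → ℝ)
    (Ystar : Matrix (Fin n) (Fin n) ℝ)
    (hYstarPSD : Ystar.PosSemidef)
    (hYstarFit : ∀ i, ((M i)ᵀ * Ystar).trace = b i)
    (φ : Fin m → ℝ)
    (hsum : ∑ i, φ i • M i = (1 : Matrix (Fin n) (Fin n) ℝ))
    (hYstarUnique : ∀ Y : Matrix (Fin n) (Fin n) ℝ,
      (∀ i, ((M i)ᵀ * Y).trace = b i) → Y ≠ Ystar →
        nuclearNorm Ystar < nuclearNorm Y) :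
    {Y : Matrix (Fin n) (Fin n) ℝ |
      (∀ i, ((M i)ᵀ * Y).trace = b i) ∧ Y.PosSemidef} = {Ystar} := by
  ext Y
  refine ⟨fun ⟨hfit, hpsd⟩ => ?_, fun hY => (Set.mem_singleton_iff.mp hY) ▸ ⟨hYstarFit, hYstarPSD⟩⟩
  by_contra hne
  have hlt := hYstarUnique Y hfit hne
  rw [nuclearNorm_eq_trace_of_posSemidef hpsd, nuclearNorm_eq_trace_of_posSemidef hYstarPSD,
    trace_eq_sum_of_sum_smul_eq_one hsum hfit,
    trace_eq_sum_of_sum_smul_eq_one hsum hYstarFit] at hlt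
  exact lt_irrefl _ hlt

/-- If the symmetric sensing matrices `M i` satisfy `∑ φ i • M i = I`, `Y⋆ ⪰ 0` fits
the measurements `b`, and `Y⋆` is the unique nuclear-norm minimizer over the affine set
`{Y | ⟨Mᵢ, Y⟩ = bᵢ for all i}`, then the PSD feasibility set is exactly `{Y⋆}`. -/
theorem psd_feasible_set_singleton_identity_span
    {n m : ℕ}
    (M : Fin m → Matrix (Fin n) (Fin n) ℝ)
    (hMsymm : ∀ i, (M i).IsSymm)
    (b : Fin m → ℝ)
    (Ystar : Matrix (Fin n) (Fin n) ℝ)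
    (hYstarPSD : Ystar.PosSemidef)
    (hYstarFit : ∀ i, ((M i)ᵀ * Ystar).trace = b i)
    (φ : Fin m → ℝ)
    (hsum : ∑ i, φ i • M i = (1 : Matrix (Fin n) (Fin n) ℝ))
    (hYstarUnique : ∀ Y : Matrix (Fin n) (Fin n) ℝ,
      (∀ i, ((M i)ᵀ * Y).trace = b i) → Y ≠ Ystar →
        nuclearNorm Ystar < nuclearNorm Y) :
    {Y : Matrix (Fin n) (Fin n) ℝ |
      (∀ i, ((M i)ᵀ * Y).trace = b i) ∧ Y.PosSemidef} = {Ystar} :=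
  psd_feasible_set_singleton_identity_span_general M b Ystar hYstarPSD hYstarFit φ hsum hYstarUnique
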